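/- Let γ : C → C' be an additive exact functor between abelian categories of finite length. Assume: (i) γ restricts to an equivalence between the full subcategories of semisimple objects of C and of C'; (ii) for all semisimple objects B₁, B₂ of C, the induced map Ext^1(B₁, B₂) → Ext^1(γ(B₁), γ(B₂)) is injective. Then γ is full and faithful. -/

import Mathlib

/-!
STATEMENT 4 (Corollary 9.5 of the paper):
Let `γ : C ⥤ C'` be an additive exact functor between abelian categories of finite
length.  Assume that (i) `γ` restricts to an equivalence between the full
subcategories of semisimple objects, and (ii) `γ` induces an injection on the Yoneda
`Ext¹`-groups between semisimple objects.  Then `γ` is full and faithful.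

Finite length is expressed by the chain conditions on subobject lattices.  Since this
version of Mathlib has no functor-induced map on `Abelian.Ext`, the induced map on
`Ext¹` is expressed via Yoneda extensions: elements of `Ext¹(A, B)` are short exact
sequences `0 → B → E → A → 0` up to equivalence, and an exact functor maps extensions
to extensions; injectivity of the induced map is injectivity on equivalence classes.
-/

open CategoryTheory CategoryTheory.Abelian CategoryTheory.Limits

attribute [local instance] CategoryTheory.Abelian.hasFiniteBiproducts

universe w₁ w₂ v₁ v₂ u₁ u₂

/-- An object of an abelian category is semisimple if it is isomorphic to a finite
direct sum (biproduct) of simple objects. -/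
def IsSemisimpleObject {C : Type u₁} [Category.{v₁} C] [Abelian C] (X : C) : Prop :=
  ∃ (n : ℕ) (f : Fin n → C), (∀ i, Simple (f i)) ∧ Nonempty (X ≅ ⨁ f)

/-- A Yoneda extension of `A` by `B`: a short exact sequence `0 → B → E → A → 0`.
Equivalence classes of these form the Yoneda `Ext¹(A, B)`. -/
structure YExt {C : Type u₁} [Category.{v₁} C] [Abelian C] (A B : C) where
  E : C
  ι : B ⟶ E
  π : E ⟶ A
  zero : ι ≫ π = 0
  shortExact : (ShortComplex.mk ι π zero).ShortExact

/-- Two extensions of `A` by `B` represent the same class in `Ext¹(A, B)` iff they are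
linked by an isomorphism commuting with the structure maps. -/
def YExtEquiv {C : Type u₁} [Category.{v₁} C] [Abelian C] {A B : C}
    (S T : YExt A B) : Prop :=
  ∃ φ : S.E ≅ T.E, S.ι ≫ φ.hom = T.ι ∧ φ.hom ≫ T.π = S.π

/-- The image of an extension under an exact functor. -/
def YExt.map {C : Type u₁} [Category.{v₁} C] [Abelian C]
    {C' : Type u₂} [Category.{v₂} C'] [Abelian C']
    (γ : C ⥤ C') [γ.Additive] [PreservesFiniteLimits γ] [PreservesFiniteColimits γ]
    {A B : C} (S : YExt A B) : YExt (γ.obj A) (γ.obj B) where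
  E := γ.obj S.E
  ι := γ.map S.ι
  π := γ.map S.π
  zero := by rw [← γ.map_comp, S.zero, γ.map_zero]
  shortExact := S.shortExact.map_of_exact γ

/-- The map `Ext¹(A, B) → Ext¹(γ A, γ B)` induced by an exact functor `γ` is
surjective. -/
def YExtMapSurjective {C : Type u₁} [Category.{v₁} C] [Abelian C]
    {C' : Type u₂} [Category.{v₂} C'] [Abelian C']
    (γ : C ⥤ C') [γ.Additive] [PreservesFiniteLimits γ] [PreservesFiniteColimits γ]
    (A B : C) : Prop :=
  ∀ T : YExt (γ.obj A) (γ.obj B), ∃ S : YExt A B, YExtEquiv (S.map γ) T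

/-- The map `Ext¹(A, B) → Ext¹(γ A, γ B)` induced by an exact functor `γ` is
injective. -/
def YExtMapInjective {C : Type u₁} [Category.{v₁} C] [Abelian C]
    {C' : Type u₂} [Category.{v₂} C'] [Abelian C']
    (γ : C ⥤ C') [γ.Additive] [PreservesFiniteLimits γ] [PreservesFiniteColimits γ]
    (A B : C) : Prop :=
  ∀ S T : YExt A B, YExtEquiv (S.map γ) (T.map γ) → YExtEquiv S T


open CategoryTheory.Preadditive
set_option linter.unusedSectionVars false
set_option linter.unusedVariables false

section RankLemmas

lemma rank_le_rank_of_rel_map {α β : Type u₁} {r : α → α → Prop} {s : β → β → Prop}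
    [IsWellFounded α r] [IsWellFounded β s] (f : α → β)
    (hf : ∀ x y, r x y → s (f x) (f y)) (x : α) :
    IsWellFounded.rank r x ≤ IsWellFounded.rank s (f x) := by
  induction x using IsWellFounded.induction r with
  | _ x ih =>
    rw [IsWellFounded.rank_eq]
    refine Ordinal.iSup_le ?_
    rintro ⟨y, hy⟩
    rw [Order.succ_le_iff]
    exact lt_of_le_of_lt (ih y hy) (IsWellFounded.rank_lt_of_rel (hf y x hy))

lemma rank_le_rank_of_le {α : Type u₁} [PartialOrder α] [WellFoundedLT α] {x y : α}
    (h : x ≤ y) :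
    IsWellFounded.rank (α := α) (· < ·) x ≤ IsWellFounded.rank (α := α) (· < ·) y := by
  rcases h.lt_or_eq with h | rfl
  · exact (IsWellFounded.rank_lt_of_rel h).le
  · exact le_rfl

/-- The "length" of an object of an abelian category with chain conditions, as the
natural sum of the rank of `⊤` (for `<`) and the rank of `⊥` (for `>`) in the
subobject lattice. -/
noncomputable def lgth {C : Type u₁} [Category.{v₁} C] [Abelian C] (X : C)
    (h₁ : WellFoundedGT (Subobject X)) (h₂ : WellFoundedLT (Subobject X)) : Ordinal ×ₗ Ordinal :=
  toLex ((@IsWellFounded.rank (Subobject X) (· < ·) h₂ ⊤),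
    (@IsWellFounded.rank (Subobject X) (· > ·) h₁ ⊥))

end RankLemmas

section LgthLemmas

variable {C : Type u₁} [Category.{v₁} C] [Abelian C]
variable (hlen : ∀ X : C, WellFoundedGT (Subobject X) ∧ WellFoundedLT (Subobject X))

lemma lgth_underlying_lt (A : C) (P : Subobject A) (hP : P ≠ ⊤) :
    lgth (P : C) (hlen _).1 (hlen _).2 < lgth A (hlen _).1 (hlen _).2 := by
  haveI h₁ := (hlen A).1; haveI h₂ := (hlen A).2
  haveI h₁' := (hlen (P : C)).1; haveI h₂' := (hlen (P : C)).2
  have hmono : Monotone (Subobject.map P.arrow).obj := Functor.monotone _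
  have hinj : Function.Injective (Subobject.map P.arrow).obj := by
    intro x y h
    have := congrArg (Subobject.pullback P.arrow).obj h
    simpa only [Subobject.pullback_map_self] using this
  have hsm : StrictMono (Subobject.map P.arrow).obj := hmono.strictMono_of_injective hinj
  have h1 : (@IsWellFounded.rank (Subobject (P : C)) (· < ·) h₂' ⊤)
      < (@IsWellFounded.rank (Subobject A) (· < ·) h₂ ⊤) := by
    calc (@IsWellFounded.rank (Subobject (P : C)) (· < ·) h₂' ⊤)
        ≤ @IsWellFounded.rank (Subobject A) (· < ·) h₂ ((Subobject.map P.arrow).obj ⊤) :=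
          rank_le_rank_of_rel_map _ (fun _ _ h => hsm h) ⊤
      _ = @IsWellFounded.rank (Subobject A) (· < ·) h₂ P := by
          rw [Subobject.map_top, Subobject.mk_arrow]
      _ < @IsWellFounded.rank (Subobject A) (· < ·) h₂ ⊤ :=
          IsWellFounded.rank_lt_of_rel (lt_top_iff_ne_top.mpr hP)
  have h2 : (@IsWellFounded.rank (Subobject (P : C)) (· > ·) h₁' ⊥)
      ≤ (@IsWellFounded.rank (Subobject A) (· > ·) h₁ ⊥) := by
    calc (@IsWellFounded.rank (Subobject (P : C)) (· > ·) h₁' ⊥)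
        ≤ @IsWellFounded.rank (Subobject A) (· > ·) h₁ ((Subobject.map P.arrow).obj ⊥) :=
          rank_le_rank_of_rel_map (r := (· > ·)) (s := (· > ·))
            (Subobject.map P.arrow).obj (fun _ _ h => hsm h) ⊥
      _ = @IsWellFounded.rank (Subobject A) (· > ·) h₁ ⊥ := by rw [Subobject.map_bot]
  exact Prod.Lex.toLex_lt_toLex.mpr (Or.inl h1)

end LgthLemmas

section Part2
variable {C : Type u₁} [Category.{v₁} C] [Abelian C]

/-- Pulling back subobjects along an epimorphism, as a concrete function. -/
noncomputable def pbSub {A A'' : C} (p : A ⟶ A'') (Q : Subobject A'') : Subobject A :=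
  Subobject.mk (pullback.snd Q.arrow p)

lemma pbSub_mono {A A'' : C} (p : A ⟶ A'') {Q₁ Q₂ : Subobject A''} (h : Q₁ ≤ Q₂) :
    pbSub p Q₁ ≤ pbSub p Q₂ := by
  refine Subobject.mk_le_mk_of_comm
    (pullback.lift (pullback.fst Q₁.arrow p ≫ Subobject.ofLE _ _ h) (pullback.snd Q₁.arrow p)
      (by rw [Category.assoc, Subobject.ofLE_arrow, pullback.condition])) ?_
  exact pullback.lift_snd _ _ _

lemma pbSub_reflect {A A'' : C} (p : A ⟶ A'') [Epi p] {Q₁ Q₂ : Subobject A''}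
    (h : pbSub p Q₁ ≤ pbSub p Q₂) : Q₁ ≤ Q₂ := by
  set w := Subobject.ofMkLEMk _ _ h with hw
  have hww : w ≫ pullback.snd Q₂.arrow p = pullback.snd Q₁.arrow p :=
    Subobject.ofMkLEMk_comp h
  haveI : Epi (pullback.fst Q₁.arrow p) := Abelian.epi_pullback_of_epi_g _ _
  have key : (w ≫ pullback.fst Q₂.arrow p) ≫ Q₂.arrow = pullback.fst Q₁.arrow p ≫ Q₁.arrow := by
    rw [Category.assoc, pullback.condition, ← Category.assoc, hww, ← pullback.condition]
  have hk : kernel.ι (pullback.fst Q₁.arrow p) ≫ (w ≫ pullback.fst Q₂.arrow p) = 0 := by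
    rw [← cancel_mono Q₂.arrow, Category.assoc, key, ← Category.assoc, kernel.condition,
      zero_comp, zero_comp]
  refine Subobject.le_of_comm (Abelian.epiDesc (pullback.fst Q₁.arrow p) _ hk) ?_
  rw [← cancel_epi (pullback.fst Q₁.arrow p), ← Category.assoc, Abelian.comp_epiDesc, key]

lemma le_pbSub {A A'' : C} (p : A ⟶ A'') (Q : Subobject A'') :
    Subobject.mk (kernel.ι p) ≤ pbSub p Q := by
  refine Subobject.mk_le_mk_of_comm
    (pullback.lift 0 (kernel.ι p) (by simp [kernel.condition])) ?_
  exact pullback.lift_snd _ _ _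

lemma lgth_cokernel_lt (hlen : ∀ X : C, WellFoundedGT (Subobject X) ∧ WellFoundedLT (Subobject X))
    (A : C) (P : Subobject A) (hP : P ≠ ⊥) :
    lgth (cokernel P.arrow) (hlen _).1 (hlen _).2 < lgth A (hlen _).1 (hlen _).2 := by
  haveI h₁ := (hlen A).1; haveI h₂ := (hlen A).2
  haveI h₁' := (hlen (cokernel P.arrow)).1; haveI h₂' := (hlen (cokernel P.arrow)).2
  set p := cokernel.π P.arrow with hp
  have hm : Monotone (pbSub p) := fun _ _ h => pbSub_mono p h
  have hsm : StrictMono (pbSub p) :=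
    hm.strictMono_of_injective
      (fun x y h => le_antisymm (pbSub_reflect p h.le) (pbSub_reflect p h.ge))
  have hbot : ∀ Q : Subobject (cokernel P.arrow), ⊥ < pbSub p Q := by
    intro Q
    have h1 : P ≤ Subobject.mk (kernel.ι p) :=
      Subobject.le_mk_of_comm (kernel.lift p P.arrow (cokernel.condition _)) (by simp)
    exact lt_of_lt_of_le (lt_of_lt_of_le (bot_lt_iff_ne_bot.mpr hP) h1) (le_pbSub p Q)
  have h1 : (@IsWellFounded.rank (Subobject (cokernel P.arrow)) (· < ·) h₂' ⊤)
      ≤ (@IsWellFounded.rank (Subobject A) (· < ·) h₂ ⊤) :=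
    le_trans
      (rank_le_rank_of_rel_map (r := (· < ·)) (s := (· < ·)) (pbSub p)
        (fun _ _ h => hsm h) ⊤)
      (rank_le_rank_of_le le_top)
  have h2 : (@IsWellFounded.rank (Subobject (cokernel P.arrow)) (· > ·) h₁' ⊥)
      < (@IsWellFounded.rank (Subobject A) (· > ·) h₁ ⊥) :=
    lt_of_le_of_lt
      (rank_le_rank_of_rel_map (r := (· > ·)) (s := (· > ·)) (pbSub p)
        (fun _ _ h => hsm h) ⊥)
      (IsWellFounded.rank_lt_of_rel (hbot ⊥))
  rcases h1.lt_or_eq with h | h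
  · exact Prod.Lex.toLex_lt_toLex.mpr (Or.inl h)
  · exact Prod.Lex.toLex_lt_toLex.mpr (Or.inr ⟨h, h2⟩)

end Part2

section SESHelpers
variable {C : Type u₁} [Category.{v₁} C] [Abelian C]

/-- A subobject gives a short exact sequence `P → A → coker`. -/
lemma shortExact_subobject {A : C} (P : Subobject A) :
    (ShortComplex.mk P.arrow (cokernel.π P.arrow) (cokernel.condition _)).ShortExact :=
  { exact := ShortComplex.exact_of_f_is_kernel _
      (Abelian.monoIsKernelOfCokernel
        (CokernelCofork.ofπ (cokernel.π P.arrow) (cokernel.condition _))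
        (cokernelIsCokernel _)) }

/-- Pulling back a short exact sequence along `h : Y ⟶ X₃`. -/
lemma shortExact_pullback {X₁ X₂ X₃ : C} {f : X₁ ⟶ X₂} {g : X₂ ⟶ X₃} {w : f ≫ g = 0}
    (hS : (ShortComplex.mk f g w).ShortExact) {Y : C} (h : Y ⟶ X₃) :
    (ShortComplex.mk
      (pullback.lift f 0 (by rw [w, zero_comp]) : X₁ ⟶ pullback g h)
      (pullback.snd g h) (pullback.lift_snd _ _ _)).ShortExact := by
  haveI := hS.mono_f
  haveI := hS.epi_g
  haveI : Mono (pullback.lift f 0 (by rw [w, zero_comp]) : X₁ ⟶ pullback g h) :=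
    mono_of_mono_fac (pullback.lift_fst _ _ _)
  haveI : Epi (pullback.snd g h) := Abelian.epi_pullback_of_epi_f _ _
  refine ⟨ShortComplex.exact_of_f_is_kernel _ (KernelFork.IsLimit.ofι' _ _ ?_)⟩
  intro T k hk
  have hk' : (k ≫ pullback.fst g h) ≫ g = 0 := by
    rw [Category.assoc, pullback.condition, ← Category.assoc, hk, zero_comp]
  refine ⟨hS.exact.lift (k ≫ pullback.fst g h) hk', ?_⟩
  apply pullback.hom_ext
  · rw [Category.assoc, pullback.lift_fst]; exact hS.exact.lift_f _ _
  · rw [Category.assoc, pullback.lift_snd, comp_zero]; exact hk.symm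

/-- Pushing out a short exact sequence along `h : X₁ ⟶ Y`. -/
lemma shortExact_pushout {X₁ X₂ X₃ : C} {f : X₁ ⟶ X₂} {g : X₂ ⟶ X₃} {w : f ≫ g = 0}
    (hS : (ShortComplex.mk f g w).ShortExact) {Y : C} (h : X₁ ⟶ Y) :
    (ShortComplex.mk (pushout.inr f h)
      (pushout.desc g 0 (by rw [w, comp_zero]) : pushout f h ⟶ X₃)
      (pushout.inr_desc _ _ _)).ShortExact := by
  haveI := hS.mono_f
  haveI := hS.epi_g
  haveI : Mono (pushout.inr f h) := Abelian.mono_pushout_of_mono_f _ _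
  haveI : Epi (pushout.desc g 0 (by rw [w, comp_zero]) : pushout f h ⟶ X₃) :=
    epi_of_epi_fac (pushout.inl_desc _ _ _)
  refine ⟨ShortComplex.exact_of_g_is_cokernel _ (CokernelCofork.IsColimit.ofπ' _ _ ?_)⟩
  intro T k hk
  have hk' : f ≫ (pushout.inl f h ≫ k) = 0 := by
    rw [← Category.assoc, pushout.condition, Category.assoc, hk, comp_zero]
  refine ⟨hS.exact.desc (pushout.inl f h ≫ k) hk', ?_⟩
  apply pushout.hom_ext
  · rw [← Category.assoc, pushout.inl_desc]; exact hS.exact.g_desc _ _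
  · rw [← Category.assoc, pushout.inr_desc, zero_comp]; exact hk.symm

/-- The preimage of a subobject of the quotient gives a short exact sequence. -/
lemma shortExact_preimage {X₂ X₃ : C} (π : X₂ ⟶ X₃) [Epi π]
    {Y₁ Y₃ : C} {i : Y₁ ⟶ X₃} {p : X₃ ⟶ Y₃} {w : i ≫ p = 0}
    (hS : (ShortComplex.mk i p w).ShortExact) :
    (ShortComplex.mk (pullback.fst π i) (π ≫ p)
      (by rw [← Category.assoc, pullback.condition, Category.assoc, w,
        comp_zero])).ShortExact := by
  haveI := hS.mono_f
  haveI := hS.epi_g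
  haveI : Mono (pullback.fst π i) := inferInstance
  haveI : Epi (π ≫ p) := epi_comp _ _
  refine ⟨ShortComplex.exact_of_f_is_kernel _ (KernelFork.IsLimit.ofι' _ _ ?_)⟩
  intro T k hk
  have hk' : (k ≫ π) ≫ p = 0 := by rw [Category.assoc]; exact hk
  refine ⟨pullback.lift k (hS.exact.lift (k ≫ π) hk') (hS.exact.lift_f _ _).symm, ?_⟩
  exact pullback.lift_fst _ _ _

/-- The image of a subobject in a bigger object gives a short exact sequence. -/
lemma shortExact_coimage {Y₂ E : C} (ι : Y₂ ⟶ E) [Mono ι]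
    {Y₁ Y₃ : C} {j : Y₁ ⟶ Y₂} {q : Y₂ ⟶ Y₃} {w : j ≫ q = 0}
    (hS : (ShortComplex.mk j q w).ShortExact) :
    (ShortComplex.mk (j ≫ ι) (pushout.inl ι q)
      (by rw [Category.assoc, pushout.condition, ← Category.assoc, w,
        zero_comp])).ShortExact := by
  haveI := hS.mono_f
  haveI := hS.epi_g
  haveI : Mono (j ≫ ι) := mono_comp _ _
  haveI : Epi (pushout.inl ι q) := inferInstance
  refine ⟨ShortComplex.exact_of_g_is_cokernel _ (CokernelCofork.IsColimit.ofπ' _ _ ?_)⟩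
  intro T k hk
  have hk' : j ≫ (ι ≫ k) = 0 := by rw [← Category.assoc]; exact hk
  refine ⟨pushout.desc k (hS.exact.desc (ι ≫ k) hk') (hS.exact.g_desc _ _).symm, ?_⟩
  exact pushout.inl_desc _ _ _

lemma exists_nontrivial_subobject {A : C} (hA0 : ¬IsZero A) (hsA : ¬Simple A) :
    ∃ P : Subobject A, P ≠ ⊥ ∧ P ≠ ⊤ := by
  by_contra h
  push_neg at h
  apply hsA
  haveI : Nontrivial (Subobject A) := Subobject.nontrivial_of_not_isZero hA0
  haveI : IsSimpleOrder (Subobject A) := ⟨fun P => or_iff_not_imp_left.mpr (h P)⟩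
  exact simple_of_isSimpleOrder_subobject A

end SESHelpers

section Gamma
variable {C : Type u₁} [Category.{v₁} C] [Abelian C]
variable {C' : Type u₂} [Category.{v₂} C'] [Abelian C']
variable (γ : C ⥤ C') [γ.Additive] [PreservesFiniteLimits γ] [PreservesFiniteColimits γ]

/-- Injectivity of `γ` on a hom-set. -/
def GIn (A B : C) : Prop := ∀ f f' : A ⟶ B, γ.map f = γ.map f' → f = f'

/-- Surjectivity of `γ` on a hom-set. -/
def GSu (A B : C) : Prop := ∀ g : γ.obj A ⟶ γ.obj B, ∃ f : A ⟶ B, γ.map f = g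

/-- Split-detection: a short exact sequence whose image splits is split. -/
def GSp (A B : C) : Prop := ∀ (E : C) (ι : B ⟶ E) (π : E ⟶ A) (w : ι ≫ π = 0),
    (ShortComplex.mk ι π w).ShortExact →
    (∃ r : γ.obj E ⟶ γ.obj B, γ.map ι ≫ r = 𝟙 (γ.obj B)) →
    ∃ ρ : E ⟶ B, ι ≫ ρ = 𝟙 B

/-- The three properties proved by simultaneous induction. -/
def GTriple (A B : C) : Prop := GIn γ A B ∧ GSu γ A B ∧ GSp γ A B

lemma yextEquiv_of_splittings {D : Type w₁} [Category.{w₂} D] [Abelian D] {A B : D}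
    (S T : YExt A B)
    (hs : (ShortComplex.mk S.ι S.π S.zero).Splitting)
    (ht : (ShortComplex.mk T.ι T.π T.zero).Splitting) : YExtEquiv S T := by
  refine ⟨hs.isoBinaryBiproduct ≪≫ ht.isoBinaryBiproduct.symm, ?_, ?_⟩
  · have h1 : S.ι ≫ hs.isoBinaryBiproduct.hom = biprod.inl := by
      apply biprod.hom_ext <;> simp [hs.f_r, S.zero]
    have h2 : (biprod.inl : B ⟶ B ⊞ A) ≫ ht.isoBinaryBiproduct.inv = T.ι := by simp
    rw [Iso.trans_hom, Iso.symm_hom, ← Category.assoc, h1, h2]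
  · have h3 : ht.isoBinaryBiproduct.inv ≫ T.π = biprod.snd := by
      apply biprod.hom_ext' <;> simp [ht.s_g, T.zero]
    have h4 : hs.isoBinaryBiproduct.hom ≫ biprod.snd = S.π := by simp
    rw [Iso.trans_hom, Iso.symm_hom, Category.assoc, h3, h4]

/-- The split extension of `A` by `B`. -/
noncomputable def trivialYExt {D : Type w₁} [Category.{w₂} D] [Abelian D] (A B : D) :
    YExt A B where
  E := B ⊞ A
  ι := biprod.inl
  π := biprod.snd
  zero := biprod.inl_snd
  shortExact := by
    have spl := ShortComplex.Splitting.ofHasBinaryBiproduct B A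
    haveI := spl.mono_f
    haveI := spl.epi_g
    exact ⟨spl.exact⟩

lemma gtriple_of_isZero_left {A B : C} (hA0 : IsZero A) : GTriple γ A B := by
  refine ⟨fun f f' _ => hA0.eq_of_src f f', fun g => ⟨0, ?_⟩, ?_⟩
  · exact (γ.map_isZero hA0).eq_of_src _ _
  · rintro E ι π w hSE -
    haveI := hSE.mono_f
    haveI : Epi ι := hSE.exact.epi_f (hA0.eq_of_tgt _ _)
    haveI : IsIso ι := isIso_of_mono_of_epi ι
    exact ⟨inv ι, IsIso.hom_inv_id ι⟩

lemma gtriple_of_isZero_right {A B : C} (hB0 : IsZero B) : GTriple γ A B :=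
  ⟨fun f f' _ => hB0.eq_of_tgt f f', fun g => ⟨0, (γ.map_isZero hB0).eq_of_tgt _ _⟩,
    fun _ ι _ _ _ _ => ⟨0, hB0.eq_of_src (ι ≫ 0) (𝟙 B)⟩⟩

lemma gtriple_base {A B : C}
    (hff : Function.Bijective (γ.map : (A ⟶ B) → (γ.obj A ⟶ γ.obj B)))
    (hext : YExtMapInjective γ A B) : GTriple γ A B := by
  refine ⟨fun f f' h => hff.1 h, fun g => hff.2 g, ?_⟩
  rintro E ι π w hSE ⟨r, hr⟩
  have hSγ := hSE.map_of_exact γ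
  set S : YExt A B := ⟨E, ι, π, w, hSE⟩ with hSdef
  have sS : (ShortComplex.mk (S.map γ).ι (S.map γ).π (S.map γ).zero).Splitting :=
    ShortComplex.Splitting.ofExactOfRetraction _ hSγ.exact r hr hSγ.epi_g
  have sT : (ShortComplex.mk ((trivialYExt A B).map γ).ι ((trivialYExt A B).map γ).π
      ((trivialYExt A B).map γ).zero).Splitting :=
    (ShortComplex.Splitting.ofHasBinaryBiproduct B A).map γ
  obtain ⟨ψ, hψι, hψπ⟩ := hext S (trivialYExt A B) (yextEquiv_of_splittings _ _ sS sT)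
  exact ⟨ψ.hom ≫ biprod.fst, (Category.assoc _ _ _).symm.trans
    ((congrArg (· ≫ (biprod.fst : B ⊞ A ⟶ B)) hψι).trans biprod.inl_fst)⟩

end Gamma

section CaseA
variable {C : Type u₁} [Category.{v₁} C] [Abelian C]
variable {C' : Type u₂} [Category.{v₂} C'] [Abelian C']
variable (γ : C ⥤ C') [γ.Additive] [PreservesFiniteLimits γ] [PreservesFiniteColimits γ]

/-- The inductive step when `A` is decomposed by a subobject `P`. -/
lemma gtriple_caseA {A B : C} (P : Subobject A)
    (h1 : GTriple γ (P : C) B) (h2 : GTriple γ (cokernel P.arrow) B) :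
    GTriple γ A B := by
  obtain ⟨h1In, h1Su, h1Sp⟩ := h1
  obtain ⟨h2In, h2Su, h2Sp⟩ := h2
  have hSA := shortExact_subobject P
  have hSAγ := hSA.map_of_exact γ
  haveI := hSAγ.epi_g
  haveI : Epi (γ.map (cokernel.π P.arrow)) := hSAγ.epi_g
  refine ⟨?_, ?_, ?_⟩
  · -- injectivity
    intro f f' h
    have hz : P.arrow ≫ (f - f') = 0 := by
      refine h1In _ 0 ?_
      rw [γ.map_zero, γ.map_comp, γ.map_sub, h, sub_self, comp_zero]
    have hd : cokernel.π P.arrow ≫ hSA.exact.desc (f - f') hz = f - f' :=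
      hSA.exact.g_desc _ _
    have hd0 : hSA.exact.desc (f - f') hz = 0 := by
      refine h2In _ 0 ?_
      rw [γ.map_zero, ← cancel_epi (γ.map (cokernel.π P.arrow)), ← γ.map_comp, hd,
        γ.map_sub, h, sub_self, comp_zero]
    have : f - f' = 0 := by rw [← hd, hd0, comp_zero]
    exact sub_eq_zero.mp this
  · -- surjectivity
    intro g
    obtain ⟨f', hf'⟩ := h1Su (γ.map P.arrow ≫ g)
    have hpo := IsPushout.of_hasPushout P.arrow f'
    have hpo' := hpo.map γ
    have hSP := shortExact_pushout hSA f'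
    have hr : γ.map (pushout.inr P.arrow f') ≫
        hpo'.desc g (𝟙 (γ.obj B)) (by rw [Category.comp_id, hf']) = 𝟙 (γ.obj B) :=
      hpo'.inr_desc _ _ _
    obtain ⟨ρP, hρP⟩ := h2Sp (pushout P.arrow f') (pushout.inr P.arrow f')
      (pushout.desc (cokernel.π P.arrow) 0
        (by rw [cokernel.condition, comp_zero])) _ hSP ⟨_, hr⟩
    have hif₀ : P.arrow ≫ (pushout.inl P.arrow f' ≫ ρP) = f' := by
      rw [← Category.assoc, pushout.condition, Category.assoc, hρP, Category.comp_id]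
    have hkill : γ.map P.arrow ≫ (γ.map (pushout.inl P.arrow f' ≫ ρP) - g) = 0 := by
      rw [comp_sub, ← γ.map_comp, hif₀, hf', sub_self]
    have hh' : γ.map (cokernel.π P.arrow) ≫ hSAγ.exact.desc _ hkill
        = γ.map (pushout.inl P.arrow f' ≫ ρP) - g := hSAγ.exact.g_desc _ _
    obtain ⟨h₀, hh₀⟩ := h2Su (hSAγ.exact.desc _ hkill)
    refine ⟨(pushout.inl P.arrow f' ≫ ρP) - cokernel.π P.arrow ≫ h₀, ?_⟩
    rw [γ.map_sub, Functor.map_comp γ (cokernel.π P.arrow) h₀, hh₀, hh']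
    abel
  · -- split-detection
    rintro E ι π w hSE ⟨r, hr⟩
    haveI := hSE.mono_f
    haveI := hSE.epi_g
    have hpb := IsPullback.of_hasPullback π P.arrow
    have hpb' := hpb.map γ
    have hS₁ := shortExact_pullback hSE P.arrow
    have hS₁γ := hS₁.map_of_exact γ
    haveI := hS₁γ.epi_g
    haveI : Epi (γ.map (pullback.snd π P.arrow)) := hS₁γ.epi_g
    set ι₁ : B ⟶ pullback π P.arrow := pullback.lift ι 0 (by rw [w, zero_comp]) with hι₁def
    have hι₁fst : ι₁ ≫ pullback.fst π P.arrow = ι := pullback.lift_fst _ _ _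
    have hι₁snd : ι₁ ≫ pullback.snd π P.arrow = 0 := pullback.lift_snd _ _ _
    have hr₁ : γ.map ι₁ ≫ (γ.map (pullback.fst π P.arrow) ≫ r) = 𝟙 (γ.obj B) := by
      rw [← Category.assoc, ← γ.map_comp, hι₁fst, hr]
    obtain ⟨ρ', hρ'⟩ := h1Sp (pullback π P.arrow) ι₁ (pullback.snd π P.arrow) hι₁snd
      hS₁ ⟨_, hr₁⟩
    have hd0 : γ.map ι₁ ≫ (γ.map (pullback.fst π P.arrow) ≫ r - γ.map ρ') = 0 := by
      rw [comp_sub, hr₁, ← γ.map_comp, hρ', γ.map_id, sub_self]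
    have hh : γ.map (pullback.snd π P.arrow) ≫ hS₁γ.exact.desc _ hd0
        = γ.map (pullback.fst π P.arrow) ≫ r - γ.map ρ' := hS₁γ.exact.g_desc _ _
    obtain ⟨h₀, hh₀⟩ := h1Su (hS₁γ.exact.desc _ hd0)
    set ρ'' := ρ' + pullback.snd π P.arrow ≫ h₀ with hρ''def
    have hρ''ret : ι₁ ≫ ρ'' = 𝟙 B := by
      rw [hρ''def, comp_add, hρ', ← Category.assoc, hι₁snd, zero_comp, add_zero]
    have hγρ'' : γ.map ρ'' = γ.map (pullback.fst π P.arrow) ≫ r := by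
      rw [hρ''def, γ.map_add, γ.map_comp, hh₀, hh]
      abel
    have hS₂ := shortExact_preimage π hSA
    have hpo₂ := IsPushout.of_hasPushout (pullback.fst π P.arrow) ρ''
    have hpo₂' := hpo₂.map γ
    have hS₃ := shortExact_pushout hS₂ ρ''
    have hr₃ : γ.map (pushout.inr (pullback.fst π P.arrow) ρ'') ≫
        hpo₂'.desc r (𝟙 (γ.obj B)) (by rw [Category.comp_id, hγρ'']) = 𝟙 (γ.obj B) :=
      hpo₂'.inr_desc _ _ _
    obtain ⟨ρ₃, hρ₃⟩ := h2Sp (pushout (pullback.fst π P.arrow) ρ'')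
      (pushout.inr (pullback.fst π P.arrow) ρ'')
      (pushout.desc (π ≫ cokernel.π P.arrow) 0
        (by rw [← Category.assoc, pullback.condition, Category.assoc, cokernel.condition,
          comp_zero, comp_zero])) _ hS₃ ⟨_, hr₃⟩
    refine ⟨pushout.inl (pullback.fst π P.arrow) ρ'' ≫ ρ₃, ?_⟩
    have step : ι ≫ pushout.inl (pullback.fst π P.arrow) ρ''
        = 𝟙 B ≫ pushout.inr (pullback.fst π P.arrow) ρ'' := by
      rw [← hι₁fst, Category.assoc, pushout.condition, ← Category.assoc, hρ''ret]
    rw [← Category.assoc, step, Category.id_comp, hρ₃]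

end CaseA

section CaseB
variable {C : Type u₁} [Category.{v₁} C] [Abelian C]
variable {C' : Type u₂} [Category.{v₂} C'] [Abelian C']
variable (γ : C ⥤ C') [γ.Additive] [PreservesFiniteLimits γ] [PreservesFiniteColimits γ]

/-- The inductive step when `B` is decomposed by a subobject `Q`. -/
lemma gtriple_caseB {A B : C} (Q : Subobject B)
    (h1 : GTriple γ A (Q : C)) (h2 : GTriple γ A (cokernel Q.arrow)) :
    GTriple γ A B := by
  obtain ⟨h1In, h1Su, h1Sp⟩ := h1
  obtain ⟨h2In, h2Su, h2Sp⟩ := h2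
  have hSB := shortExact_subobject Q
  have hSBγ := hSB.map_of_exact γ
  haveI := hSB.mono_f
  haveI := hSBγ.mono_f
  haveI : Mono (γ.map Q.arrow) := hSBγ.mono_f
  refine ⟨?_, ?_, ?_⟩
  · -- injectivity
    intro f f' h
    have hz : (f - f') ≫ cokernel.π Q.arrow = 0 := by
      refine h2In _ 0 ?_
      rw [γ.map_zero, γ.map_comp, γ.map_sub, h, sub_self, zero_comp]
    have hl : hSB.exact.lift (f - f') hz ≫ Q.arrow = f - f' := hSB.exact.lift_f _ _
    have hl0 : hSB.exact.lift (f - f') hz = 0 := by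
      refine h1In _ 0 ?_
      rw [γ.map_zero, ← cancel_mono (γ.map Q.arrow), ← γ.map_comp, hl, γ.map_sub, h,
        sub_self, zero_comp]
    have : f - f' = 0 := by rw [← hl, hl0, zero_comp]
    exact sub_eq_zero.mp this
  · -- surjectivity
    intro g
    obtain ⟨f'', hf''⟩ := h2Su (g ≫ γ.map (cokernel.π Q.arrow))
    have hpb := IsPullback.of_hasPullback (cokernel.π Q.arrow) f''
    have hpb' := hpb.map γ
    have hS_Q := shortExact_pullback hSB f''
    have hS_Qγ := hS_Q.map_of_exact γ
    haveI := hS_Qγ.mono_f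
    haveI := hS_Q.epi_g
    have hs : hpb'.lift g (𝟙 (γ.obj A)) (by rw [Category.id_comp, hf''])
        ≫ γ.map (pullback.snd (cokernel.π Q.arrow) f'') = 𝟙 (γ.obj A) :=
      hpb'.lift_snd _ _ _
    have spl' := ShortComplex.Splitting.ofExactOfSection _ hS_Qγ.exact _ hs hS_Qγ.mono_f
    obtain ⟨ρQ, hρQ⟩ := h1Sp (pullback (cokernel.π Q.arrow) f'')
      (pullback.lift Q.arrow 0 (by rw [cokernel.condition, zero_comp]))
      (pullback.snd (cokernel.π Q.arrow) f'') (pullback.lift_snd _ _ _) hS_Q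
      ⟨spl'.r, spl'.f_r⟩
    obtain ⟨sq, hσ⟩ : ∃ sq : A ⟶ pullback (cokernel.π Q.arrow) f'',
        sq ≫ pullback.snd (cokernel.π Q.arrow) f'' = 𝟙 A :=
      ⟨(ShortComplex.Splitting.ofExactOfRetraction _ hS_Q.exact ρQ hρQ hS_Q.epi_g).s,
        (ShortComplex.Splitting.ofExactOfRetraction _ hS_Q.exact ρQ hρQ hS_Q.epi_g).s_g⟩
    have hf₀ : (sq ≫ pullback.fst (cokernel.π Q.arrow) f'') ≫ cokernel.π Q.arrow
        = f'' := by
      rw [Category.assoc, pullback.condition, ← Category.assoc, hσ, Category.id_comp]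
    have hkill : (γ.map (sq ≫ pullback.fst (cokernel.π Q.arrow) f'') - g)
        ≫ γ.map (cokernel.π Q.arrow) = 0 := by
      rw [sub_comp, ← γ.map_comp, hf₀, hf'', sub_self]
    have hh' : hSBγ.exact.lift _ hkill ≫ γ.map Q.arrow
        = γ.map (sq ≫ pullback.fst (cokernel.π Q.arrow) f'') - g :=
      hSBγ.exact.lift_f _ _
    obtain ⟨h₀, hh₀⟩ := h1Su (hSBγ.exact.lift _ hkill)
    refine ⟨(sq ≫ pullback.fst (cokernel.π Q.arrow) f'') - h₀ ≫ Q.arrow, ?_⟩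
    rw [γ.map_sub, Functor.map_comp γ h₀ Q.arrow, hh₀]
    erw [hh']
    abel
  · -- split-detection
    rintro E ι π w hSE ⟨r, hr⟩
    haveI := hSE.mono_f
    haveI := hSE.epi_g
    have hSEγ := hSE.map_of_exact γ
    haveI := hSEγ.mono_f
    haveI := hSEγ.epi_g
    obtain ⟨s', hs'⟩ : ∃ s' : γ.obj A ⟶ γ.obj E, s' ≫ γ.map π = 𝟙 (γ.obj A) :=
      ⟨(ShortComplex.Splitting.ofExactOfRetraction _ hSEγ.exact r hr hSEγ.epi_g).s,
        (ShortComplex.Splitting.ofExactOfRetraction _ hSEγ.exact r hr hSEγ.epi_g).s_g⟩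
    -- push out along q : B ⟶ B''
    have hpo₄ := IsPushout.of_hasPushout ι (cokernel.π Q.arrow)
    have hpo₄' := hpo₄.map γ
    have hS₄ := shortExact_pushout hSE (cokernel.π Q.arrow)
    have hS₄γ := hS₄.map_of_exact γ
    haveI := hS₄γ.mono_f
    haveI := hS₄.epi_g
    have hr₄ : γ.map (pushout.inr ι (cokernel.π Q.arrow)) ≫
        hpo₄'.desc (r ≫ γ.map (cokernel.π Q.arrow)) (𝟙 _)
          (by rw [← Category.assoc, hr, Category.id_comp, Category.comp_id])
        = 𝟙 (γ.obj (cokernel Q.arrow)) := hpo₄'.inr_desc _ _ _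
    obtain ⟨ρ₄, hρ₄⟩ := h2Sp (pushout ι (cokernel.π Q.arrow))
      (pushout.inr ι (cokernel.π Q.arrow))
      (pushout.desc π 0 (by rw [w, comp_zero])) _ hS₄ ⟨_, hr₄⟩
    obtain ⟨σ₄, hσ₄⟩ : ∃ σ₄ : A ⟶ pushout ι (cokernel.π Q.arrow),
        σ₄ ≫ pushout.desc π 0 (by rw [w, comp_zero]) = 𝟙 A :=
      ⟨(ShortComplex.Splitting.ofExactOfRetraction _ hS₄.exact ρ₄ hρ₄ hS₄.epi_g).s,
        (ShortComplex.Splitting.ofExactOfRetraction _ hS₄.exact ρ₄ hρ₄ hS₄.epi_g).s_g⟩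
    -- adjust the section
    have d₂kill : (γ.map σ₄ - s' ≫ γ.map (pushout.inl ι (cokernel.π Q.arrow)))
        ≫ γ.map (pushout.desc π 0 (by rw [w, comp_zero])) = 0 := by
      rw [sub_comp, ← γ.map_comp, hσ₄, γ.map_id, Category.assoc, ← γ.map_comp,
        pushout.inl_desc, hs', sub_self]
    have hh₂ : hS₄γ.exact.lift _ d₂kill ≫ γ.map (pushout.inr ι (cokernel.π Q.arrow))
        = γ.map σ₄ - s' ≫ γ.map (pushout.inl ι (cokernel.π Q.arrow)) :=
      hS₄γ.exact.lift_f _ _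
    obtain ⟨h₂₀, hh₂₀⟩ := h2Su (hS₄γ.exact.lift _ d₂kill)
    set σ₅ := σ₄ - h₂₀ ≫ pushout.inr ι (cokernel.π Q.arrow) with hσ₅def
    have hσ₅ : σ₅ ≫ pushout.desc π 0 (by rw [w, comp_zero]) = 𝟙 A := by
      rw [hσ₅def, sub_comp, hσ₄, Category.assoc, pushout.inr_desc, comp_zero, sub_zero]
    have hγσ₅ : γ.map σ₅ = s' ≫ γ.map (pushout.inl ι (cokernel.π Q.arrow)) := by
      rw [hσ₅def, γ.map_sub, Functor.map_comp γ h₂₀ _, hh₂₀]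
      erw [hh₂]
      abel
    -- pull back along the adjusted section
    have hS₅ := shortExact_coimage ι hSB
    have hpb₂ := IsPullback.of_hasPullback (pushout.inl ι (cokernel.π Q.arrow)) σ₅
    have hpb₂' := hpb₂.map γ
    have hS₆ := shortExact_pullback hS₅ σ₅
    have hS₆γ := hS₆.map_of_exact γ
    haveI := hS₆γ.mono_f
    haveI := hS₆.epi_g
    have hs₂ : hpb₂'.lift s' (𝟙 (γ.obj A)) (by rw [Category.id_comp, hγσ₅])
        ≫ γ.map (pullback.snd (pushout.inl ι (cokernel.π Q.arrow)) σ₅) = 𝟙 (γ.obj A) :=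
      hpb₂'.lift_snd _ _ _
    have spl₆ := ShortComplex.Splitting.ofExactOfSection _ hS₆γ.exact _ hs₂ hS₆γ.mono_f
    obtain ⟨ρ₂, hρ₂⟩ := h1Sp (pullback (pushout.inl ι (cokernel.π Q.arrow)) σ₅)
      (pullback.lift (Q.arrow ≫ ι) 0
        (by rw [Category.assoc, pushout.condition, ← Category.assoc, cokernel.condition,
          zero_comp, zero_comp]))
      (pullback.snd (pushout.inl ι (cokernel.π Q.arrow)) σ₅) (pullback.lift_snd _ _ _)
      hS₆ ⟨spl₆.r, spl₆.f_r⟩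
    obtain ⟨σ₂, hσ₂⟩ : ∃ σ₂ : A ⟶ pullback (pushout.inl ι (cokernel.π Q.arrow)) σ₅,
        σ₂ ≫ pullback.snd (pushout.inl ι (cokernel.π Q.arrow)) σ₅ = 𝟙 A :=
      ⟨(ShortComplex.Splitting.ofExactOfRetraction _ hS₆.exact ρ₂ hρ₂ hS₆.epi_g).s,
        (ShortComplex.Splitting.ofExactOfRetraction _ hS₆.exact ρ₂ hρ₂ hS₆.epi_g).s_g⟩
    have hfststep : pullback.fst (pushout.inl ι (cokernel.π Q.arrow)) σ₅ ≫ π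
        = pullback.snd (pushout.inl ι (cokernel.π Q.arrow)) σ₅ := by
      have h5 : pushout.inl ι (cokernel.π Q.arrow) ≫ pushout.desc π 0
          (by rw [w, comp_zero]) = π := pushout.inl_desc _ _ _
      rw [← h5, ← Category.assoc, pullback.condition, Category.assoc, hσ₅,
        Category.comp_id]
    have hσπ : (σ₂ ≫ pullback.fst (pushout.inl ι (cokernel.π Q.arrow)) σ₅) ≫ π
        = 𝟙 A := by
      rw [Category.assoc, hfststep, hσ₂]
    have spl_fin := ShortComplex.Splitting.ofExactOfSection _ hSE.exact _ hσπ hSE.mono_f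
    exact ⟨spl_fin.r, spl_fin.f_r⟩

end CaseB

section Assembly
variable {C : Type u₁} [Category.{v₁} C] [Abelian C]

lemma isSemisimpleObject_of_simple {X : C} (h : Simple X) : IsSemisimpleObject X := by
  refine ⟨1, fun _ => X, fun _ => h, ⟨?_⟩⟩
  refine ⟨biproduct.lift (fun _ => 𝟙 X), biproduct.π _ 0, by simp, ?_⟩
  apply biproduct.hom_ext
  intro j
  have hj : j = 0 := Subsingleton.elim _ _
  subst hj
  simp

end Assembly

theorem stmt4 {C : Type u₁} [Category.{v₁} C] [Abelian C]
    {C' : Type u₂} [Category.{v₂} C'] [Abelian C']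
    -- both categories have finite length:
    (hlen : ∀ X : C, WellFoundedGT (Subobject X) ∧ WellFoundedLT (Subobject X))
    (hlen' : ∀ X : C', WellFoundedGT (Subobject X) ∧ WellFoundedLT (Subobject X))
    -- `γ` is an additive exact functor:
    (γ : C ⥤ C') [γ.Additive] [PreservesFiniteLimits γ] [PreservesFiniteColimits γ]
    -- (i) `γ` restricts to an equivalence on semisimple objects:
    (hss : ∀ B : C, IsSemisimpleObject B → IsSemisimpleObject (γ.obj B))
    (hfull_faithful : ∀ B₁ B₂ : C, IsSemisimpleObject B₁ → IsSemisimpleObject B₂ →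
      Function.Bijective (γ.map : (B₁ ⟶ B₂) → (γ.obj B₁ ⟶ γ.obj B₂)))
    (hes : ∀ X : C', IsSemisimpleObject X →
      ∃ B : C, IsSemisimpleObject B ∧ Nonempty (X ≅ γ.obj B))
    -- (ii) `γ` induces an injection on `Ext¹` between semisimple objects:
    (hext : ∀ B₁ B₂ : C, IsSemisimpleObject B₁ → IsSemisimpleObject B₂ →
      YExtMapInjective γ B₁ B₂) :
    γ.Full ∧ γ.Faithful := by
  have key : ∀ A B : C, GTriple γ A B := by
    have main : ∀ (n : (Ordinal ×ₗ Ordinal) × (Ordinal ×ₗ Ordinal)) (A B : C),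
        lgth A (hlen A).1 (hlen A).2 = n.1 → lgth B (hlen B).1 (hlen B).2 = n.2 →
        GTriple γ A B := by
      intro n
      refine (WellFounded.prod_lex wellFounded_lt wellFounded_lt).induction
        (C := fun n : (Ordinal ×ₗ Ordinal) × (Ordinal ×ₗ Ordinal) => ∀ A B : C,
          lgth A (hlen A).1 (hlen A).2 = n.1 → lgth B (hlen B).1 (hlen B).2 = n.2 →
          GTriple γ A B) n ?_
      rintro ⟨a, b⟩ IH A B rfl rfl
      by_cases hA0 : IsZero A
      · exact gtriple_of_isZero_left γ hA0
      by_cases hB0 : IsZero B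
      · exact gtriple_of_isZero_right γ hB0
      by_cases hsA : Simple A
      · by_cases hsB : Simple B
        · exact gtriple_base γ
            (hfull_faithful A B (isSemisimpleObject_of_simple hsA)
              (isSemisimpleObject_of_simple hsB))
            (hext A B (isSemisimpleObject_of_simple hsA) (isSemisimpleObject_of_simple hsB))
        · obtain ⟨Q, hQb, hQt⟩ := exists_nontrivial_subobject hB0 hsB
          refine gtriple_caseB γ Q ?_ ?_
          · exact IH (lgth A (hlen A).1 (hlen A).2, lgth (Q : C) (hlen _).1 (hlen _).2)
              (Prod.Lex.right _ (lgth_underlying_lt hlen B Q hQt)) A (Q : C) rfl rfl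
          · exact IH (lgth A (hlen A).1 (hlen A).2,
                lgth (cokernel Q.arrow) (hlen _).1 (hlen _).2)
              (Prod.Lex.right _ (lgth_cokernel_lt hlen B Q hQb)) A _ rfl rfl
      · obtain ⟨P, hPb, hPt⟩ := exists_nontrivial_subobject hA0 hsA
        refine gtriple_caseA γ P ?_ ?_
        · exact IH (lgth (P : C) (hlen _).1 (hlen _).2, lgth B (hlen B).1 (hlen B).2)
            (Prod.Lex.left _ _ (lgth_underlying_lt hlen A P hPt)) _ B rfl rfl
        · exact IH (lgth (cokernel P.arrow) (hlen _).1 (hlen _).2,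
              lgth B (hlen B).1 (hlen B).2)
            (Prod.Lex.left _ _ (lgth_cokernel_lt hlen A P hPb)) _ B rfl rfl
    exact fun A B =>
      main (lgth A (hlen A).1 (hlen A).2, lgth B (hlen B).1 (hlen B).2) A B rfl rfl
  constructor
  · exact ⟨fun {A B} g => (key A B).2.1 g⟩
  · refine ⟨fun {A B} => ?_⟩
    intro f f' h
    exact (key A B).1 f f' h
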